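/- (Directional fractional derivatives.) Let N ≥ 1. There exists a constant A > 0 depending only on N such that for every 0 < s < 1, every r > 0, every x₀ ∈ ℝ^N, every u ∈ C¹(closure of B_r(x₀)) and every unit vector ω ∈ 𝕊^{N−1}, one has ∫_{B_r(x₀)} ( ∫_{r_ω(x)}^{R_ω(x)} |u(x)−u(x+ρω)|²/|ρ|^{1+2s} dρ ) dx ≤ A·[u]²_{W^{s,2}(B_r(x₀))}, where R_ω(x) = sup{ ρ ∈ ℝ : x+ρω ∈ B_r(x₀) } and r_ω(x) = inf{ ρ ∈ ℝ : x+ρω ∈ B_r(x₀) }. -/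

import Mathlib

open MeasureTheory Metric
open scoped ENNReal

noncomputable section

/-- Euclidean space `ℝ^N`. -/
abbrev Spc (N : ℕ) := EuclideanSpace ℝ (Fin N)

/-- Squared Gagliardo `W^{s,2}` seminorm on a set `E ⊆ ℝ^N`. -/
noncomputable def gagliardoSqOn (N : ℕ) (s : ℝ) (E : Set (Spc N)) (u : Spc N → ℝ) : ℝ≥0∞ :=
  ∫⁻ x in E, ∫⁻ y in E, ENNReal.ofReal (|u x - u y| ^ 2 / ‖x - y‖ ^ ((N : ℝ) + 2 * s))

/-- `R_ω(x) = sup { ρ : x + ρ ω ∈ B_r(x₀) }`. -/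
noncomputable def Rdir (N : ℕ) (x₀ : Spc N) (r : ℝ) (ω : Spc N) (x : Spc N) : ℝ :=
  sSup { ρ : ℝ | x + ρ • ω ∈ ball x₀ r }

/-- `r_ω(x) = inf { ρ : x + ρ ω ∈ B_r(x₀) }`. -/
noncomputable def rdir (N : ℕ) (x₀ : Spc N) (r : ℝ) (ω : Spc N) (x : Spc N) : ℝ :=
  sInf { ρ : ℝ | x + ρ • ω ∈ ball x₀ r }

/-!
For `x` and `x + ρω` in the ball `B`, average
`|u x - u (x + ρω)|² ≤ 2 |u x - u y|² + 2 |u (x + ρω) - u y|²` over `y` in a ball of radius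
`|ρ| / 16` placed near the midpoint of the chord and pushed towards `x₀`, so that it stays inside
`B` (`chordBall`). On that ball `|x - y|` and `|ρ|` are comparable. Integrating in `(x, ρ)` and
exchanging the order of integration, each pair `(x, y)` only sees `ρ` in a set of length
`≲ |x - y|`, which turns the weight `|ρ|^{-(N+1+2s)}` into `|x - y|^{-(N+2s)}`. The term with
`u (x + ρω)` reduces to the one with `u x` under the measure-preserving change of variables
`(ρ, x) ↦ (-ρ, x + ρω)`, which reverses every chord.
-/

theorem Set.OrdConnected.Ioo_csInf_csSup_subset {α : Type*} [ConditionallyCompleteLinearOrder α]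
    {s : Set α} (hs : s.OrdConnected) (hne : s.Nonempty) : Set.Ioo (sInf s) (sSup s) ⊆ s := by
  intro t ht
  obtain ⟨p, hp, hpt⟩ := exists_lt_of_csInf_lt hne ht.1
  obtain ⟨q, hq, htq⟩ := exists_lt_of_lt_csSup hne ht.2
  exact hs.out hp hq ⟨hpt.le, htq.le⟩

section Geometry

variable {E : Type*} [NormedAddCommGroup E] [NormedSpace ℝ E]

theorem Convex.ordConnected_setOf_add_smul_mem {K : Set E} (hK : Convex ℝ K) (x ω : E) :
    {ρ : ℝ | x + ρ • ω ∈ K}.OrdConnected := by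
  have h : {ρ : ℝ | x + ρ • ω ∈ K} = AffineMap.lineMap x (x + ω) ⁻¹' K := by
    ext ρ
    simp [AffineMap.lineMap_apply, add_comm]
  rw [h, ← convex_iff_ordConnected]
  exact hK.affine_preimage _

def chordBall (x₀ : E) (r : ℝ) (a b : E) : Set E :=
  ball (AffineMap.lineMap (midpoint ℝ a b) x₀ (dist a b / (16 * r))) (dist a b / 16)

variable {x₀ a b y : E} {r : ℝ}

theorem chordBall_comm (x₀ : E) (r : ℝ) (a b : E) : chordBall x₀ r a b = chordBall x₀ r b a := by
  rw [chordBall, chordBall, midpoint_comm, dist_comm]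

theorem dist_midpoint_lt_of_mem_chordBall (ha : a ∈ ball x₀ r) (hb : b ∈ ball x₀ r)
    (hy : y ∈ chordBall x₀ r a b) : dist y (midpoint ℝ a b) < dist a b / 8 := by
  have hr : 0 < r := pos_of_mem_ball ha
  have hm : dist (midpoint ℝ a b) x₀ < r := (convex_ball x₀ r).midpoint_mem ha hb
  set t := dist a b / (16 * r)
  have ht : 0 ≤ t := by positivity
  calc dist y (midpoint ℝ a b)
      ≤ dist y (AffineMap.lineMap (midpoint ℝ a b) x₀ t)
        + dist (AffineMap.lineMap (midpoint ℝ a b) x₀ t) (midpoint ℝ a b) := dist_triangle _ _ _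
    _ < dist a b / 16 + t * r := by
        rw [dist_lineMap_left, Real.norm_of_nonneg ht]
        exact add_lt_add_of_lt_of_le hy (by gcongr)
    _ = dist a b / 8 := by simp only [t]; field_simp; ring

theorem chordBall_subset_ball (ha : a ∈ ball x₀ r) (hb : b ∈ ball x₀ r) :
    chordBall x₀ r a b ⊆ ball x₀ r := by
  intro y hy
  have hr : 0 < r := pos_of_mem_ball ha
  have hm : dist (midpoint ℝ a b) x₀ < r := (convex_ball x₀ r).midpoint_mem ha hb
  have hab : dist a b < 2 * r := by
    linarith [dist_triangle_right a b x₀, mem_ball.1 ha, mem_ball.1 hb]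
  set t := dist a b / (16 * r)
  have ht : t ≤ 1 := by rw [div_le_one (by positivity)]; linarith
  rw [mem_ball]
  calc dist y x₀
      ≤ dist y (AffineMap.lineMap (midpoint ℝ a b) x₀ t)
        + dist (AffineMap.lineMap (midpoint ℝ a b) x₀ t) x₀ := dist_triangle _ _ _
    _ < dist a b / 16 + (1 - t) * r := by
        rw [dist_lineMap_right, Real.norm_of_nonneg (by linarith)]
        exact add_lt_add_of_lt_of_le hy (by gcongr)
    _ = r := by simp only [t]; field_simp; ring

theorem dist_lt_of_mem_chordBall (ha : a ∈ ball x₀ r) (hb : b ∈ ball x₀ r)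
    (hy : y ∈ chordBall x₀ r a b) : dist a y < dist a b ∧ dist a b < 3 * dist a y := by
  have hym := dist_midpoint_lt_of_mem_chordBall ha hb hy
  have ham : dist a (midpoint ℝ a b) = dist a b / 2 := by
    rw [dist_left_midpoint]; norm_num; ring
  have hpos : 0 < dist a b := by
    have := dist_nonneg.trans_lt hym; linarith
  constructor
  · linarith [dist_triangle_right a y (midpoint ℝ a b)]
  · linarith [dist_triangle a y (midpoint ℝ a b)]

theorem isOpen_setOf_mem_chordBall (x₀ : E) (r : ℝ) :
    IsOpen {q : (E × E) × E | q.2 ∈ chordBall x₀ r q.1.1 q.1.2} := by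
  simp only [chordBall, mem_ball, AffineMap.lineMap_apply, midpoint_eq_smul_add, vsub_eq_sub,
    vadd_eq_add]
  exact isOpen_lt (by fun_prop) (by fun_prop)

variable {x ω : E} {e : ℝ} {u : E → ℝ}

theorem indicator_chordBall_le (hω : ‖ω‖ = 1) (he : 0 ≤ e + 1) {ρ : ℝ} (hx : x ∈ ball x₀ r)
    (hρ : x + ρ • ω ∈ ball x₀ r) (y : E) :
    (chordBall x₀ r x (x + ρ • ω)).indicator
        (fun y => ENNReal.ofReal (|u x - u y| ^ 2 / dist x (x + ρ • ω) ^ (e + 1))) y ≤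
      (Set.Icc (-(3 * dist x y)) (3 * dist x y)).indicator (fun _ => (ball x₀ r).indicator
        (fun y => ENNReal.ofReal (|u x - u y| ^ 2 / dist x y ^ (e + 1))) y) ρ := by
  by_cases hy : y ∈ chordBall x₀ r x (x + ρ • ω)
  swap
  · simp [hy]
  have hdist : dist x (x + ρ • ω) = |ρ| := by
    rw [dist_self_add_right, norm_smul, hω, mul_one, Real.norm_eq_abs]
  obtain ⟨hlt, hgt⟩ := dist_lt_of_mem_chordBall hx hρ hy
  rw [hdist] at hlt hgt
  rw [Set.indicator_of_mem hy, Set.indicator_of_mem (show ρ ∈ Set.Icc _ _ from abs_le.1 hgt.le),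
    Set.indicator_of_mem (chordBall_subset_ball hx hρ hy), hdist]
  gcongr
  exact Real.rpow_pos_of_pos (by linarith) _

end Geometry

section ChordIntegrals

open Module

variable {E : Type*} [NormedAddCommGroup E] [NormedSpace ℝ E] [MeasurableSpace E] [BorelSpace E]
  (μ : Measure E) {x₀ ω x : E} {r e : ℝ} {u : E → ℝ}

def chordEnds (ω : E) (z : ℝ × E) : E × E := (z.2, z.2 + z.1 • ω)

@[fun_prop]
theorem measurable_chordEnds (ω : E) : Measurable (chordEnds ω) :=
  measurable_snd.prodMk (by fun_prop : Continuous fun z : ℝ × E => z.2 + z.1 • ω).measurable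

theorem setLIntegral_chordEnds_swap [SFinite μ] [μ.IsAddLeftInvariant] (S : Set E) (ω : E)
    (f : E × E → ℝ≥0∞) :
    ∫⁻ z in chordEnds ω ⁻¹' (S ×ˢ S), f (chordEnds ω z).swap ∂(volume.prod μ) =
      ∫⁻ z in chordEnds ω ⁻¹' (S ×ˢ S), f (chordEnds ω z) ∂(volume.prod μ) := by
  let T : ℝ × E → ℝ × E := fun z => (-z.1, z.2 + z.1 • ω)
  have hT : Function.Involutive T := fun z => by ext <;> simp [T]
  have hTm : Measurable T := by fun_prop
  have hTe : MeasurableEmbedding T :=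
    (⟨hT.toPerm T, hTm, hTm⟩ : ℝ × E ≃ᵐ ℝ × E).measurableEmbedding
  have hTp : MeasurePreserving T (volume.prod μ) (volume.prod μ) :=
    (Measure.measurePreserving_neg volume).skew_product
      (by fun_prop : Continuous fun z : ℝ × E => z.2 + z.1 • ω).measurable
      (ae_of_all _ fun ρ => map_add_right_eq_self μ (ρ • ω))
  have hswap : ∀ z, (chordEnds ω z).swap = chordEnds ω (T z) := fun z => by
    simp [chordEnds, T]
  have hpre : T ⁻¹' (chordEnds ω ⁻¹' (S ×ˢ S)) = chordEnds ω ⁻¹' (S ×ˢ S) := by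
    ext z; simp [chordEnds, T, and_comm]
  simp_rw [hswap]
  calc _ = ∫⁻ z in T ⁻¹' (chordEnds ω ⁻¹' (S ×ˢ S)), f (chordEnds ω (T z)) ∂(volume.prod μ) := by
        rw [hpre]
    _ = _ := hTp.setLIntegral_comp_preimage_emb hTe (fun z => f (chordEnds ω z)) _

theorem setLIntegral_chordEnds_eq [SFinite μ] {S : Set E} (hS : MeasurableSet S) (ω : E)
    {F : ℝ × E → ℝ≥0∞} (hF : Measurable F) :
    ∫⁻ z in chordEnds ω ⁻¹' (S ×ˢ S), F z ∂(volume.prod μ) =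
      ∫⁻ x in S, ∫⁻ ρ in {ρ | x + ρ • ω ∈ S}, F (ρ, x) ∂volume ∂μ := by
  classical
  have hP : MeasurableSet (chordEnds ω ⁻¹' (S ×ˢ S)) :=
    measurable_chordEnds ω (hS.prod hS)
  rw [← lintegral_indicator hP, lintegral_prod_symm' _ (hF.indicator hP), ← lintegral_indicator hS]
  congr 1 with x
  by_cases hx : x ∈ S
  · have hSx : MeasurableSet {ρ : ℝ | x + ρ • ω ∈ S} := measurableSet_preimage (by fun_prop) hS
    rw [Set.indicator_of_mem hx, ← lintegral_indicator hSx]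
    congr 1 with ρ
    simp [Set.indicator_apply, chordEnds, hx]
  · simp [chordEnds, hx]

def chordBallIntegral (x₀ : E) (r : ℝ) (u : E → ℝ) (e : ℝ) (p : E × E) : ℝ≥0∞ :=
  ∫⁻ y in chordBall x₀ r p.1 p.2, ENNReal.ofReal (|u p.1 - u y| ^ 2 / dist p.1 p.2 ^ e) ∂μ

theorem measurable_indicator_chordBall [SecondCountableTopology E] (hu : Measurable u) :
    Measurable fun q : (E × E) × E => (chordBall x₀ r q.1.1 q.1.2).indicator
      (fun y => ENNReal.ofReal (|u q.1.1 - u y| ^ 2 / dist q.1.1 q.1.2 ^ e)) q.2 :=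
  Measurable.indicator (s := {q | q.2 ∈ chordBall x₀ r q.1.1 q.1.2})
    (f := fun q : (E × E) × E => ENNReal.ofReal (|u q.1.1 - u q.2| ^ 2 / dist q.1.1 q.1.2 ^ e))
    (by fun_prop) (isOpen_setOf_mem_chordBall x₀ r).measurableSet

theorem chordBallIntegral_eq_lintegral_indicator (p : E × E) :
    chordBallIntegral μ x₀ r u e p = ∫⁻ y, (chordBall x₀ r p.1 p.2).indicator
      (fun y => ENNReal.ofReal (|u p.1 - u y| ^ 2 / dist p.1 p.2 ^ e)) y ∂μ :=
  (lintegral_indicator measurableSet_ball _).symm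

theorem measurable_chordBallIntegral [SecondCountableTopology E] [SFinite μ] (hu : Measurable u) :
    Measurable (chordBallIntegral μ x₀ r u e) := by
  convert (measurable_indicator_chordBall hu).lintegral_prod_right' (ν := μ) using 1
  exact funext (chordBallIntegral_eq_lintegral_indicator μ)

theorem ofReal_div_rpow_le_lintegral_ball [FiniteDimensional ℝ E] [μ.IsAddHaarMeasure]
    (u : E → ℝ) (a b c : E) (α : ℝ) :
    ENNReal.ofReal (|u a - u b| ^ 2 / dist a b ^ α) ≤
      2 * 16 ^ finrank ℝ E / μ (ball 0 1) *
        ∫⁻ y in ball c (dist a b / 16),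
          (ENNReal.ofReal (|u a - u y| ^ 2 / dist a b ^ (finrank ℝ E + α)) +
            ENNReal.ofReal (|u b - u y| ^ 2 / dist a b ^ (finrank ℝ E + α))) ∂μ := by
  rcases eq_or_ne a b with rfl | hab
  · simp
  set d := finrank ℝ E
  set ℓ := dist a b
  have hℓ : 0 < ℓ := dist_pos.2 hab
  have hV0 : μ (ball 0 1) ≠ 0 := (measure_ball_pos μ _ one_pos).ne'
  have hVtop : μ (ball 0 1) ≠ ∞ := measure_ball_lt_top.ne
  have hpt : ∀ y, ENNReal.ofReal (|u a - u b| ^ 2 / ℓ ^ (d + α)) ≤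
      2 * (ENNReal.ofReal (|u a - u y| ^ 2 / ℓ ^ (d + α)) +
        ENNReal.ofReal (|u b - u y| ^ 2 / ℓ ^ (d + α))) := fun y => by
    rw [← ENNReal.ofReal_add (by positivity) (by positivity), ← ENNReal.ofReal_ofNat 2,
      ← ENNReal.ofReal_mul zero_le_two, ← add_div, ← mul_div_assoc]
    gcongr
    simp only [sq_abs]
    nlinarith [sq_nonneg (u a + u b - 2 * u y)]
  -- the ball has measure `(ℓ / 16) ^ d * μ (ball 0 1)`, which turns the exponent `α` into `d + α`
  have hscale : ENNReal.ofReal (|u a - u b| ^ 2 / ℓ ^ α) = 16 ^ d / μ (ball 0 1) *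
      (ENNReal.ofReal (|u a - u b| ^ 2 / ℓ ^ (d + α)) * μ (ball c (ℓ / 16))) := by
    rw [Measure.addHaar_ball_of_pos μ c (by positivity), ENNReal.div_eq_inv_mul,
      show ∀ X P : ℝ≥0∞, (μ (ball 0 1))⁻¹ * 16 ^ d * (X * (P * μ (ball 0 1))) =
        16 ^ d * X * P * ((μ (ball 0 1))⁻¹ * μ (ball 0 1)) from fun _ _ => by ring,
      ENNReal.inv_mul_cancel hV0 hVtop, mul_one, ← ENNReal.ofReal_ofNat 16,
      ← ENNReal.ofReal_pow (by norm_num), ← ENNReal.ofReal_mul (by positivity),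
      ← ENNReal.ofReal_mul (by positivity), Real.rpow_add hℓ, Real.rpow_natCast]
    congr 1
    rw [div_pow]
    norm_num [d]
    field_simp
  calc ENNReal.ofReal (|u a - u b| ^ 2 / ℓ ^ α)
      = 16 ^ d / μ (ball 0 1) *
          ∫⁻ _ in ball c (ℓ / 16), ENNReal.ofReal (|u a - u b| ^ 2 / ℓ ^ (d + α)) ∂μ := by
        rw [hscale, setLIntegral_const]
    _ ≤ 16 ^ d / μ (ball 0 1) * ∫⁻ y in ball c (ℓ / 16),
          2 * (ENNReal.ofReal (|u a - u y| ^ 2 / ℓ ^ (d + α)) +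
            ENNReal.ofReal (|u b - u y| ^ 2 / ℓ ^ (d + α))) ∂μ := by
        gcongr with y
        exact hpt y
    _ = _ := by
        rw [lintegral_const_mul' _ _ ENNReal.ofNat_ne_top, ENNReal.div_eq_inv_mul,
          ENNReal.div_eq_inv_mul]
        ring

theorem ofReal_div_rpow_le_chordBallIntegral [FiniteDimensional ℝ E] [μ.IsAddHaarMeasure]
    (hu : Measurable u) (x₀ : E) (r α : ℝ)
    (p : E × E) :
    ENNReal.ofReal (|u p.1 - u p.2| ^ 2 / dist p.1 p.2 ^ α) ≤
      2 * 16 ^ finrank ℝ E / μ (ball 0 1) *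
        (chordBallIntegral μ x₀ r u (finrank ℝ E + α) p +
          chordBallIntegral μ x₀ r u (finrank ℝ E + α) p.swap) := by
  rw [chordBallIntegral, chordBallIntegral, Prod.fst_swap, Prod.snd_swap, chordBall_comm x₀ r p.2,
    dist_comm p.2, ← lintegral_add_left (by fun_prop)]
  exact ofReal_div_rpow_le_lintegral_ball μ u p.1 p.2 _ α

theorem setLIntegral_chordBallIntegral_le [SecondCountableTopology E] [SFinite μ]
    (hu : Measurable u) (hω : ‖ω‖ = 1) (he : 0 ≤ e + 1) (hx : x ∈ ball x₀ r) :
    ∫⁻ ρ in {ρ : ℝ | x + ρ • ω ∈ ball x₀ r}, chordBallIntegral μ x₀ r u (e + 1) (x, x + ρ • ω) ≤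
      6 * ∫⁻ y in ball x₀ r, ENNReal.ofReal (|u x - u y| ^ 2 / ‖x - y‖ ^ e) ∂μ := by
  set S := {ρ : ℝ | x + ρ • ω ∈ ball x₀ r}
  have hS : MeasurableSet S := measurableSet_preimage (by fun_prop) measurableSet_ball
  have hslice : ∀ y, ∫⁻ ρ in S, (chordBall x₀ r x (x + ρ • ω)).indicator
        (fun y => ENNReal.ofReal (|u x - u y| ^ 2 / dist x (x + ρ • ω) ^ (e + 1))) y ≤
      (ball x₀ r).indicator (fun y => 6 * ENNReal.ofReal (|u x - u y| ^ 2 / ‖x - y‖ ^ e)) y := by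
    intro y
    set c := (ball x₀ r).indicator
      (fun y => ENNReal.ofReal (|u x - u y| ^ 2 / dist x y ^ (e + 1))) y
    calc _ ≤ ∫⁻ ρ in S, (Set.Icc (-(3 * dist x y)) (3 * dist x y)).indicator (fun _ => c) ρ :=
          setLIntegral_mono' hS fun ρ hρ => indicator_chordBall_le hω he hx hρ y
      _ ≤ ∫⁻ ρ, (Set.Icc (-(3 * dist x y)) (3 * dist x y)).indicator (fun _ => c) ρ :=
          setLIntegral_le_lintegral _ _
      _ = c * ENNReal.ofReal (6 * dist x y) := by
          rw [lintegral_indicator_const measurableSet_Icc, Real.volume_Icc]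
          ring_nf
      _ ≤ _ := by
          by_cases hyB : y ∈ ball x₀ r
          swap
          · simp [c, hyB]
          simp only [c, Set.indicator_of_mem hyB]
          rcases (dist_nonneg : 0 ≤ dist x y).eq_or_lt with hd | hd
          · simp [← hd]
          rw [← ENNReal.ofReal_mul (by positivity), ← ENNReal.ofReal_ofNat 6,
            ← ENNReal.ofReal_mul (by norm_num), ← dist_eq_norm, Real.rpow_add_one hd.ne']
          apply le_of_eq
          congr 1
          field_simp
  calc _ = ∫⁻ ρ in S, ∫⁻ y, (chordBall x₀ r x (x + ρ • ω)).indicator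
        (fun y => ENNReal.ofReal (|u x - u y| ^ 2 / dist x (x + ρ • ω) ^ (e + 1))) y ∂μ :=
        by simp only [chordBallIntegral_eq_lintegral_indicator]
    _ = ∫⁻ y, ∫⁻ ρ in S, (chordBall x₀ r x (x + ρ • ω)).indicator
        (fun y => ENNReal.ofReal (|u x - u y| ^ 2 / dist x (x + ρ • ω) ^ (e + 1))) y ∂volume ∂μ :=
        lintegral_lintegral_swap ((measurable_indicator_chordBall hu).comp
          (by fun_prop : Measurable fun q : ℝ × E => ((x, x + q.1 • ω), q.2))).aemeasurable
    _ ≤ ∫⁻ y, (ball x₀ r).indicator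
          (fun y => 6 * ENNReal.ofReal (|u x - u y| ^ 2 / ‖x - y‖ ^ e)) y ∂μ :=
        lintegral_mono hslice
    _ = _ := by
        rw [lintegral_indicator measurableSet_ball, lintegral_const_mul' _ _ ENNReal.ofNat_ne_top]

theorem lintegral_chord_le_gagliardo [FiniteDimensional ℝ E] [μ.IsAddHaarMeasure] {s : ℝ}
    (hs : 0 ≤ s) (x₀ : E) (hω : ‖ω‖ = 1) (hu : Measurable u) :
    ∫⁻ x in ball x₀ r, ∫⁻ ρ in {ρ : ℝ | x + ρ • ω ∈ ball x₀ r},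
        ENNReal.ofReal (|u x - u (x + ρ • ω)| ^ 2 / |ρ| ^ (1 + 2 * s)) ∂volume ∂μ ≤
      24 * 16 ^ finrank ℝ E / μ (ball 0 1) *
        ∫⁻ x in ball x₀ r, ∫⁻ y in ball x₀ r,
          ENNReal.ofReal (|u x - u y| ^ 2 / ‖x - y‖ ^ ((finrank ℝ E : ℝ) + 2 * s)) ∂μ ∂μ := by
  set B := ball x₀ r
  set d := finrank ℝ E
  set P := chordEnds ω ⁻¹' (B ×ˢ B)
  set Φ := chordBallIntegral μ x₀ r u (d + (1 + 2 * s))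
  set C : ℝ≥0∞ := 2 * 16 ^ d / μ (ball 0 1)
  have hCtop : C ≠ ∞ := ENNReal.div_ne_top
    (ENNReal.mul_ne_top ENNReal.ofNat_ne_top (ENNReal.pow_ne_top ENNReal.ofNat_ne_top))
    (measure_ball_pos μ _ one_pos).ne'
  have hΦ : Measurable fun z => Φ (chordEnds ω z) :=
    (measurable_chordBallIntegral μ hu).comp (measurable_chordEnds ω)
  have hdist : ∀ z : ℝ × E, dist (chordEnds ω z).1 (chordEnds ω z).2 = |z.1| := fun z => by
    rw [chordEnds, dist_self_add_right, norm_smul, hω, mul_one, Real.norm_eq_abs]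
  calc _ = ∫⁻ z in P, ENNReal.ofReal (|u (chordEnds ω z).1 - u (chordEnds ω z).2| ^ 2 /
        dist (chordEnds ω z).1 (chordEnds ω z).2 ^ (1 + 2 * s)) ∂(volume.prod μ) := by
        simp_rw [hdist]
        exact (setLIntegral_chordEnds_eq μ measurableSet_ball ω (F := fun z => ENNReal.ofReal
          (|u (chordEnds ω z).1 - u (chordEnds ω z).2| ^ 2 / |z.1| ^ (1 + 2 * s)))
          (by fun_prop)).symm
    _ ≤ ∫⁻ z in P, C * (Φ (chordEnds ω z) + Φ (chordEnds ω z).swap) ∂(volume.prod μ) :=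
        lintegral_mono fun z => ofReal_div_rpow_le_chordBallIntegral μ hu x₀ r _ _
    _ = C * (2 * ∫⁻ z in P, Φ (chordEnds ω z) ∂(volume.prod μ)) := by
        rw [lintegral_const_mul' _ _ hCtop, lintegral_add_left hΦ, setLIntegral_chordEnds_swap,
          two_mul]
    _ = C * (2 * ∫⁻ x in B, ∫⁻ ρ in {ρ : ℝ | x + ρ • ω ∈ B}, Φ (x, x + ρ • ω) ∂volume ∂μ) := by
        rw [setLIntegral_chordEnds_eq μ measurableSet_ball ω hΦ]
        rfl
    _ ≤ C * (2 * ∫⁻ x in B, 6 * ∫⁻ y in B,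
          ENNReal.ofReal (|u x - u y| ^ 2 / ‖x - y‖ ^ ((d : ℝ) + 2 * s)) ∂μ ∂μ) := by
        gcongr C * (2 * ?_)
        refine setLIntegral_mono' measurableSet_ball fun x hx => ?_
        have h := setLIntegral_chordBallIntegral_le μ hu hω (e := d + 2 * s) (by positivity) hx
        rwa [show (d : ℝ) + 2 * s + 1 = d + (1 + 2 * s) by ring] at h
    _ = _ := by
        simp only [C, ENNReal.div_eq_inv_mul]
        rw [lintegral_const_mul' _ _ ENNReal.ofNat_ne_top]
        ring

end ChordIntegrals

theorem directional_fractional_derivative_general (N : ℕ) :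
    ∃ A : ℝ, 0 < A ∧
      ∀ s : ℝ, 0 < s → s < 1 → ∀ r : ℝ, 0 < r → ∀ x₀ : Spc N,
        ∀ u : Spc N → ℝ, ContDiffOn ℝ 1 u (closure (ball x₀ r)) →
          ∀ ω : Spc N, ‖ω‖ = 1 →
            (∫⁻ x in ball x₀ r,
                ∫⁻ ρ in Set.Ioo (rdir N x₀ r ω x) (Rdir N x₀ r ω x),
                  ENNReal.ofReal (|u x - u (x + ρ • ω)| ^ 2 / |ρ| ^ (1 + 2 * s))) ≤
              ENNReal.ofReal A * gagliardoSqOn N s (ball x₀ r) u := by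
  classical
  set C : ℝ≥0∞ := 24 * 16 ^ N / volume (ball (0 : Spc N) 1)
  have hC0 : C ≠ 0 := ENNReal.div_ne_zero.2 ⟨by simp, measure_ball_lt_top.ne⟩
  have hCtop : C ≠ ∞ := ENNReal.div_ne_top (by simp [ENNReal.mul_eq_top])
    (measure_ball_pos volume _ one_pos).ne'
  refine ⟨C.toReal, ENNReal.toReal_pos hC0 hCtop, fun s hs _ r _ x₀ u hu ω hω => ?_⟩
  -- only the values of `u` on the ball enter, so `u` may be replaced by a measurable function
  set v := (ball x₀ r).piecewise u 0
  have hv : Measurable v := (hu.continuousOn.mono subset_closure).measurable_piecewise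
    continuousOn_const measurableSet_ball
  have huv : Set.EqOn u v (ball x₀ r) := fun x hx => (Set.piecewise_eq_of_mem _ _ _ hx).symm
  have hIoo : ∀ x ∈ ball x₀ r, Set.Ioo (rdir N x₀ r ω x) (Rdir N x₀ r ω x) ⊆
      {ρ : ℝ | x + ρ • ω ∈ ball x₀ r} := fun x hx =>
    ((convex_ball x₀ r).ordConnected_setOf_add_smul_mem x ω).Ioo_csInf_csSup_subset
      ⟨0, by simpa using hx⟩
  calc _ ≤ ∫⁻ x in ball x₀ r, ∫⁻ ρ in {ρ : ℝ | x + ρ • ω ∈ ball x₀ r},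
        ENNReal.ofReal (|v x - v (x + ρ • ω)| ^ 2 / |ρ| ^ (1 + 2 * s)) :=
        setLIntegral_mono' measurableSet_ball fun x hx =>
          (lintegral_mono_set (hIoo x hx)).trans_eq <| setLIntegral_congr_fun
            (measurableSet_preimage (by fun_prop) measurableSet_ball)
            fun ρ hρ => by rw [huv hx, huv hρ]
    _ ≤ C * ∫⁻ x in ball x₀ r, ∫⁻ y in ball x₀ r,
          ENNReal.ofReal (|v x - v y| ^ 2 / ‖x - y‖ ^ ((N : ℝ) + 2 * s)) := by
        simpa only [finrank_euclideanSpace_fin] using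
          lintegral_chord_le_gagliardo volume hs.le x₀ hω hv
    _ = _ := by
        rw [ENNReal.ofReal_toReal hCtop, gagliardoSqOn]
        congr 1
        refine setLIntegral_congr_fun measurableSet_ball fun x hx =>
          setLIntegral_congr_fun measurableSet_ball fun y hy => ?_
        rw [huv hx, huv hy]

/-- Directional fractional derivatives are controlled by the Gagliardo seminorm on the ball,
with a constant depending only on the dimension. -/
theorem directional_fractional_derivative (N : ℕ) (hN : 1 ≤ N) :
    ∃ A : ℝ, 0 < A ∧
      ∀ s : ℝ, 0 < s → s < 1 → ∀ r : ℝ, 0 < r → ∀ x₀ : Spc N,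
        ∀ u : Spc N → ℝ, ContDiffOn ℝ 1 u (closure (ball x₀ r)) →
          ∀ ω : Spc N, ‖ω‖ = 1 →
            (∫⁻ x in ball x₀ r,
                ∫⁻ ρ in Set.Ioo (rdir N x₀ r ω x) (Rdir N x₀ r ω x),
                  ENNReal.ofReal (|u x - u (x + ρ • ω)| ^ 2 / |ρ| ^ (1 + 2 * s))) ≤
              ENNReal.ofReal A * gagliardoSqOn N s (ball x₀ r) u :=
  directional_fractional_derivative_general N
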